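/- Let c ∈ ℝⁿ have nonnegative entries and let F denote the (unnormalized) discrete Fourier transform on ℂⁿ. Define Z_c = {z ∈ ℂⁿ : |F(z)[j]| = c[j] for all j}. Then for every x ∈ ℂⁿ, min_{z ∈ Z_c} ½‖x − z‖₂² = (1/(2n)) Σⱼ (|F(x)[j]| − c[j])². -/

import Mathlib

/-!
By Parseval, `n‖x - z‖² = Σⱼ ‖F(x)[j] - F(z)[j]‖²`, and the reverse triangle inequality bounds
each term below by `(‖F(x)[j]‖ - c[j])²` when `z ∈ Z_c`. Equality holds when `F(z)[j]` is `c[j]`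
times the phase of `F(x)[j]`; such a `z` exists because `F` is injective by Parseval, hence
surjective.
-/

/-- Unnormalized discrete Fourier transform on `ℂⁿ`. -/
noncomputable def dft (n : ℕ) (x : EuclideanSpace ℂ (Fin n)) : EuclideanSpace ℂ (Fin n) :=
  WithLp.toLp 2 fun j => ∑ t : Fin n, x t *
    Complex.exp (-2 * Real.pi * Complex.I * (j : ℕ) * (t : ℕ) / n)

open Complex Finset
open scoped ComplexConjugate

lemma sum_exp_mul_conj_exp {n : ℕ} (s t : Fin n) :
    ∑ j : Fin n, cexp (-2 * Real.pi * I * (j : ℕ) * (s : ℕ) / n) *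
        conj (cexp (-2 * Real.pi * I * (j : ℕ) * (t : ℕ) / n)) =
      if s = t then (n : ℂ) else 0 := by
  -- the `j`-th summand is `ζ ^ j` for the `n`-th root of unity `ζ = ω ^ (t - s)`, `ω = e^{2πi/n}`
  have hω := isPrimitiveRoot_exp n s.pos.ne'
  obtain ⟨ζ, hζ⟩ : ∃ ζ, ζ = cexp (2 * Real.pi * I / n) ^ ((t : ℤ) - s) := ⟨_, rfl⟩
  have hterm (j : Fin n) : cexp (-2 * Real.pi * I * (j : ℕ) * (s : ℕ) / n) *
      conj (cexp (-2 * Real.pi * I * (j : ℕ) * (t : ℕ) / n)) = ζ ^ (j : ℕ) := by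
    rw [hζ, ← exp_int_mul, ← exp_nat_mul, ← exp_conj, ← exp_add]
    congr 1
    simp only [map_div₀, map_mul, map_neg, map_ofNat, conj_ofReal, conj_I, map_natCast]
    push_cast
    ring
  have hζn : ζ ^ n = 1 := by
    rw [hζ, ← zpow_natCast, ← zpow_mul, mul_comm ((t : ℤ) - s), zpow_mul, zpow_natCast,
      hω.pow_eq_one, one_zpow]
  simp_rw [hterm]
  rw [Fin.sum_univ_eq_sum_range (ζ ^ ·)]
  split_ifs with hst
  · simp [hζ, hst]
  · have hζ1 : ζ ≠ 1 := by
      rw [hζ, Ne, hω.zpow_eq_one_iff_dvd]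
      intro hdvd
      have hts := Int.eq_zero_of_abs_lt_dvd hdvd (by rw [abs_lt]; omega)
      exact hst (Fin.ext (by omega))
    rw [geom_sum_eq hζ1, hζn, sub_self, zero_div]

theorem norm_dft_sq (n : ℕ) (u : EuclideanSpace ℂ (Fin n)) :
    ‖dft n u‖ ^ 2 = n * ‖u‖ ^ 2 := by
  have h : ∑ j, dft n u j * conj (dft n u j) = n * ∑ s, u s * conj (u s) := calc
    ∑ j, dft n u j * conj (dft n u j)
        = ∑ s, ∑ t, u s * conj (u t) * ∑ j : Fin n,
            cexp (-2 * Real.pi * I * (j : ℕ) * (s : ℕ) / n) *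
              conj (cexp (-2 * Real.pi * I * (j : ℕ) * (t : ℕ) / n)) := by
          simp only [dft, PiLp.toLp_apply, map_sum, map_mul]
          simp_rw [sum_mul_sum, mul_sum]
          rw [sum_comm]
          refine sum_congr rfl fun s _ => ?_
          rw [sum_comm]
          refine sum_congr rfl fun t _ => sum_congr rfl fun j _ => ?_
          ring
    _ = ∑ s, ∑ t, u s * conj (u t) * if s = t then (n : ℂ) else 0 := by
          simp only [sum_exp_mul_conj_exp]
    _ = n * ∑ s, u s * conj (u s) := by
          simp [mul_sum, mul_comm]
  simp only [mul_conj'] at h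
  simp only [EuclideanSpace.norm_sq_eq]
  exact_mod_cast h

noncomputable def dftLinearMap (n : ℕ) :
    EuclideanSpace ℂ (Fin n) →ₗ[ℂ] EuclideanSpace ℂ (Fin n) where
  toFun := dft n
  map_add' x y := by ext j; simp [dft, add_mul, sum_add_distrib]
  map_smul' a x := by ext j; simp [dft, mul_sum, mul_assoc]

theorem dft_sub (n : ℕ) (x z : EuclideanSpace ℂ (Fin n)) :
    dft n (x - z) = dft n x - dft n z :=
  map_sub (dftLinearMap n) x z

theorem dft_surjective {n : ℕ} (hn : 0 < n) : Function.Surjective (dft n) := by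
  refine (dftLinearMap n).injective_iff_surjective.mp <|
    (injective_iff_map_eq_zero (dftLinearMap n)).mpr fun u hu => ?_
  have h := norm_dft_sq n u
  rw [show dft n u = 0 from hu, norm_zero, eq_comm] at h
  simpa [hn.ne'] using h

theorem natCast_mul_norm_sub_sq (n : ℕ) (x z : EuclideanSpace ℂ (Fin n)) :
    n * ‖x - z‖ ^ 2 = ∑ j, ‖dft n x j - dft n z j‖ ^ 2 := by
  rw [← norm_dft_sq, dft_sub, EuclideanSpace.norm_sq_eq]
  rfl

theorem Complex.exists_norm_eq_and_norm_sub_eq (a : ℂ) {r : ℝ} (hr : 0 ≤ r) :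
    ∃ b : ℂ, ‖b‖ = r ∧ ‖a - b‖ = |‖a‖ - r| := by
  refine ⟨r * cexp (a.arg * I), by simp [abs_of_nonneg hr], ?_⟩
  have h : a - r * cexp (a.arg * I) = ((‖a‖ - r : ℝ) : ℂ) * cexp (a.arg * I) := by
    rw [ofReal_sub, sub_mul, norm_mul_exp_arg_mul_I]
  rw [h, norm_mul, norm_exp_ofReal_mul_I, mul_one, norm_real, Real.norm_eq_abs]

/-- for `c ≥ 0` and `Z_c = {z : |F(z)[j]| = c[j] ∀j}`,
`min_{z ∈ Z_c} ½‖x − z‖² = (1/(2n)) Σⱼ (|F(x)[j]| − c[j])²`, the minimum being attained. -/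
theorem dist_to_modulus_set (n : ℕ) (hn : 0 < n) (c : Fin n → ℝ) (hc : ∀ j, 0 ≤ c j)
    (x : EuclideanSpace ℂ (Fin n)) :
    IsLeast ((fun z => 1/2 * ‖x - z‖^2) ''
        {z : EuclideanSpace ℂ (Fin n) | ∀ j, ‖dft n z j‖ = c j})
      (1/(2*n) * ∑ j, (‖dft n x j‖ - c j)^2) := by
  have half_sq_eq (z : EuclideanSpace ℂ (Fin n)) :
      1/2 * ‖x - z‖ ^ 2 = 1/(2*n) * ∑ j, ‖dft n x j - dft n z j‖ ^ 2 := by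
    rw [← natCast_mul_norm_sub_sq]
    field_simp
  constructor
  · choose w hw using fun j => (dft n x j).exists_norm_eq_and_norm_sub_eq (hc j)
    obtain ⟨z, hz⟩ := dft_surjective hn (WithLp.toLp 2 w)
    refine ⟨z, fun j => by simp [hz, (hw j).1], ?_⟩
    simp only [half_sq_eq, hz, PiLp.toLp_apply, (hw _).2, sq_abs]
  · rintro _ ⟨z, hz, rfl⟩
    dsimp only
    rw [half_sq_eq]
    refine mul_le_mul_of_nonneg_left (sum_le_sum fun j _ => ?_) (by positivity)
    rw [← hz j, ← sq_abs]
    exact pow_le_pow_left₀ (abs_nonneg _) (abs_norm_sub_norm_le _ _) 2
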